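/- Let L > 0 be fixed and let K(k) = ∫₀^{π/2} (1 - k² sin²θ)^{-1/2} dθ denote the complete elliptic integral of the first kind. Define ω: (0,1) → ℝ by ω(k) = 16 K(k)² ((1-k²)√(k⁴-k²+1) + k⁴-k²+1) / ((1 + √(k⁴-k²+1) - k²) L²). Then ω is strictly increasing on (0,1), ω(k) → 4π²/L² as k → 0⁺, and ω(k) → ∞ as k → 1⁻; in particular ω is a bijection from (0,1) onto (4π²/L², ∞). -/

import Mathlib

/-!
With `Q = k⁴ - k² + 1` the numerator of `ω` factors as `√Q (1 + √Q - k²)`, so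
`ω = (16 / L²) K² √Q`. Differentiating under the integral sign,
`K' = ∫ k sin²θ / Δ³ ≥ k ∫ sin²θ / Δ ≥ k K / 2` where `Δ = √(1 - k² sin²θ)`; the last step is
Chebyshev's inequality for the similarly ordered `sin²θ` and `1 / Δ`, obtained by pairing `θ` with
`π/2 - θ`. Hence `√Q (K² √Q)' / K = 2 K' Q + K (2k³ - k) ≥ k K (k⁴ + k²) > 0`.
At `k = 0` we have `K = π/2` and `Q = 1`. As `k → 1`, the bound `cos θ ≤ π/2 - θ` gives
`Δ ≤ √(1 - k²) + (π/2 - θ)`, hence `K ≥ log (1 + π / (2 √(1 - k²))) → ∞`. A continuous strictly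
increasing function with these one-sided limits is a bijection onto `(4π²/L², ∞)`.
-/

open Real Set Filter

/-- The complete elliptic integral of the first kind
`K(k) = ∫₀^{π/2} (1 - k² sin²θ)^{-1/2} dθ`. -/
noncomputable def ellipticK (k : ℝ) : ℝ :=
  ∫ θ in (0 : ℝ)..(Real.pi / 2), 1 / Real.sqrt (1 - k ^ 2 * Real.sin θ ^ 2)

/-- The wave frequency `ω(k)` of the cnoidal wave, as a function of the elliptic
modulus `k ∈ (0,1)`. -/
noncomputable def omegaOf (L k : ℝ) : ℝ :=
  16 * ellipticK k ^ 2 * ((1 - k ^ 2) * Real.sqrt (k ^ 4 - k ^ 2 + 1) + k ^ 4 - k ^ 2 + 1) /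
    ((1 + Real.sqrt (k ^ 4 - k ^ 2 + 1) - k ^ 2) * L ^ 2)

open Topology MeasureTheory

lemma StrictMonoOn.bijOn_Ioo_Ioi {α β : Type*} [ConditionallyCompleteLinearOrder α]
    [TopologicalSpace α] [OrderTopology α] [DenselyOrdered α] [LinearOrder β] [TopologicalSpace β]
    [OrderTopology β] [NoMaxOrder β] {f : α → β} {a b : α} {c : β} (hab : a < b)
    (hf : StrictMonoOn f (Ioo a b)) (hfc : ContinuousOn f (Ioo a b))
    (ha : Tendsto f (𝓝[>] a) (𝓝 c)) (hb : Tendsto f (𝓝[<] b) atTop) :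
    BijOn f (Ioo a b) (Ioi c) := by
  have : (𝓝[>] a).NeBot := nhdsGT_neBot_of_exists_gt ⟨b, hab⟩
  have : (𝓝[<] b).NeBot := nhdsLT_neBot_of_exists_lt ⟨a, hab⟩
  refine ⟨fun x hx => ?_, hf.injOn, fun y hy => ?_⟩
  · obtain ⟨z, haz, hzx⟩ := exists_between hx.1
    have hz : z ∈ Ioo a b := ⟨haz, hzx.trans hx.2⟩
    refine lt_of_le_of_lt (le_of_tendsto ha ?_) (hf hz hx hzx)
    filter_upwards [Ioo_mem_nhdsGT hz.1] with w hw
    exact (hf ⟨hw.1, hw.2.trans hz.2⟩ hz hw.2).le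
  · obtain ⟨z, hzy, hz⟩ := ((ha.eventually (gt_mem_nhds hy)).and (Ioo_mem_nhdsGT hab)).exists
    obtain ⟨w, hwy, hw⟩ := ((hb.eventually_gt_atTop y).and (Ioo_mem_nhdsLT hab)).exists
    have hsub : uIcc z w ⊆ Ioo a b := ordConnected_Ioo.uIcc_subset hz hw
    obtain ⟨x, hx, rfl⟩ := intermediate_value_uIcc (hfc.mono hsub)
      (mem_uIcc.2 (Or.inl ⟨hzy.le, hwy.le⟩))
    exact ⟨x, hsub hx, rfl⟩

lemma integral_comp_sin_sq_div_two_le {g : ℝ → ℝ} (hg : MonotoneOn g (Icc 0 1))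
    (hgc : ContinuousOn g (Icc 0 1)) :
    (∫ θ in (0 : ℝ)..π / 2, g (sin θ ^ 2)) / 2 ≤
      ∫ θ in (0 : ℝ)..π / 2, sin θ ^ 2 * g (sin θ ^ 2) := by
  have hmem : ∀ θ, sin θ ^ 2 ∈ Icc (0 : ℝ) 1 := fun θ => ⟨sq_nonneg _, sin_sq_le_one θ⟩
  have hgs : Continuous fun θ => g (sin θ ^ 2) := hgc.comp_continuous (by fun_prop) hmem
  set h : ℝ → ℝ := fun θ => (sin θ ^ 2 - 1 / 2) * g (sin θ ^ 2)
  have hcont : Continuous h := ((continuous_sin.pow 2).sub continuous_const).mul hgs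
  have hpair : ∀ θ, 0 ≤ h θ + h (π / 2 - θ) := by
    intro θ
    have hcos : sin (π / 2 - θ) ^ 2 = 1 - sin θ ^ 2 := by
      rw [sin_pi_div_two_sub, cos_sq']
    have hmem' : 1 - sin θ ^ 2 ∈ Icc (0 : ℝ) 1 := hcos ▸ hmem (π / 2 - θ)
    simp only [h, hcos]
    rcases le_total (sin θ ^ 2) (1 / 2) with hle | hle
    · nlinarith [hg (hmem θ) hmem' (by linarith : sin θ ^ 2 ≤ 1 - sin θ ^ 2)]
    · nlinarith [hg hmem' (hmem θ) (by linarith : 1 - sin θ ^ 2 ≤ sin θ ^ 2)]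
  have hreflect : ∫ θ in (0 : ℝ)..π / 2, h (π / 2 - θ) = ∫ θ in (0 : ℝ)..π / 2, h θ := by
    simp [intervalIntegral.integral_comp_sub_left h (π / 2)]
  have hnonneg : 0 ≤ ∫ θ in (0 : ℝ)..π / 2, h θ := by
    have hsum : 0 ≤ ∫ θ in (0 : ℝ)..π / 2, (h θ + h (π / 2 - θ)) :=
      intervalIntegral.integral_nonneg pi_div_two_pos.le fun θ _ => hpair θ
    have hint : IntervalIntegrable (fun θ => h (π / 2 - θ)) volume 0 (π / 2) :=
      (hcont.comp (continuous_sub_left (π / 2))).intervalIntegrable _ _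
    rw [intervalIntegral.integral_add (hcont.intervalIntegrable _ _) hint, hreflect] at hsum
    linarith
  have hsplit : ∫ θ in (0 : ℝ)..π / 2, h θ =
      (∫ θ in (0 : ℝ)..π / 2, sin θ ^ 2 * g (sin θ ^ 2)) -
        (∫ θ in (0 : ℝ)..π / 2, g (sin θ ^ 2)) / 2 := by
    have hint : IntervalIntegrable (fun θ => sin θ ^ 2 * g (sin θ ^ 2)) volume 0 (π / 2) :=
      ((continuous_sin.pow 2).mul hgs).intervalIntegrable _ _
    rw [← intervalIntegral.integral_div,
      ← intervalIntegral.integral_sub hint ((hgs.div_const 2).intervalIntegrable _ _)]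
    congr 1 with θ
    ring
  linarith

lemma hasDerivAt_one_div_sqrt_one_sub_sq_mul {c y : ℝ} (hy : y ^ 2 * c < 1) :
    HasDerivAt (fun y => 1 / √(1 - y ^ 2 * c)) (y * c / √(1 - y ^ 2 * c) ^ 3) y := by
  have hu : 0 < 1 - y ^ 2 * c := by linarith
  have hs := sqrt_pos.2 hu
  have hsq := sq_sqrt hu.le
  have hlin : HasDerivAt (fun y => 1 - y ^ 2 * c) (-(2 * y * c)) y := by
    simpa using ((hasDerivAt_pow 2 y).mul_const c).const_sub 1
  refine ((hasDerivAt_const y (1 : ℝ)).div (hlin.sqrt hu.ne') hs.ne').congr_deriv ?_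
  field_simp
  ring

section EllipticK

variable {k : ℝ}

lemma one_sub_sq_mul_sin_sq_pos (hk : k ^ 2 < 1) (θ : ℝ) : 0 < 1 - k ^ 2 * sin θ ^ 2 := by
  nlinarith [sin_sq_le_one θ, sq_nonneg k]

lemma continuous_div_sqrt_one_sub_sq_mul_sin_sq_pow (hk : k ^ 2 < 1) {g : ℝ → ℝ}
    (hg : Continuous g) (n : ℕ) : Continuous fun θ => g θ / √(1 - k ^ 2 * sin θ ^ 2) ^ n :=
  hg.div (by fun_prop) fun θ => pow_ne_zero n (sqrt_pos.2 (one_sub_sq_mul_sin_sq_pos hk θ)).ne'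

lemma intervalIntegrable_ellipticK_integrand (hk : k ^ 2 < 1) (a b : ℝ) :
    IntervalIntegrable (fun θ => 1 / √(1 - k ^ 2 * sin θ ^ 2)) volume a b := by
  simpa only [pow_one] using
    (continuous_div_sqrt_one_sub_sq_mul_sin_sq_pow hk continuous_const 1).intervalIntegrable a b

lemma pi_div_two_le_ellipticK (hk : k ^ 2 < 1) : π / 2 ≤ ellipticK k := by
  have hle : ∀ θ, 1 ≤ 1 / √(1 - k ^ 2 * sin θ ^ 2) := fun θ =>
    one_le_one_div (sqrt_pos.2 (one_sub_sq_mul_sin_sq_pos hk θ))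
      (sqrt_le_one.2 (by nlinarith [sq_nonneg k, sq_nonneg (sin θ)]))
  calc π / 2 = ∫ θ in (0 : ℝ)..π / 2, (1 : ℝ) := by simp
    _ ≤ ellipticK k := intervalIntegral.integral_mono_on pi_div_two_pos.le
      intervalIntegrable_const (intervalIntegrable_ellipticK_integrand hk 0 (π / 2))
      fun θ _ => hle θ

lemma hasDerivAt_ellipticK (hk : |k| < 1) :
    HasDerivAt ellipticK
      (∫ θ in (0 : ℝ)..π / 2, k * sin θ ^ 2 / √(1 - k ^ 2 * sin θ ^ 2) ^ 3) k := by
  set b := (1 + |k|) / 2 with hb_def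
  have hkb : |k| < b := by linarith
  have hb1 : b < 1 := by linarith
  have hs : Ioo (-b) b ∈ 𝓝 k :=
    Ioo_mem_nhds (by linarith [neg_abs_le k]) (by linarith [le_abs_self k])
  have hsq : ∀ y ∈ Ioo (-b) b, y ^ 2 < b ^ 2 := fun y hy => sq_lt_sq' hy.1 hy.2
  have hb2 : b ^ 2 < 1 := by nlinarith [abs_nonneg k]
  have hk2 : k ^ 2 < 1 := (hsq k (mem_of_mem_nhds hs)).trans hb2
  have hu : ∀ y ∈ Ioo (-b) b, ∀ θ, 1 - b ^ 2 ≤ 1 - y ^ 2 * sin θ ^ 2 := fun y hy θ => by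
    nlinarith [sin_sq_le_one θ, sq_nonneg y, hsq y hy]
  refine (intervalIntegral.hasDerivAt_integral_of_dominated_loc_of_deriv_le
    (F := fun y θ => 1 / √(1 - y ^ 2 * sin θ ^ 2))
    (F' := fun y θ => y * sin θ ^ 2 / √(1 - y ^ 2 * sin θ ^ 2) ^ 3)
    (bound := fun _ => 1 / √(1 - b ^ 2) ^ 3) hs ?_
    (intervalIntegrable_ellipticK_integrand hk2 _ _) ?_ ?_ intervalIntegrable_const ?_).2
  · filter_upwards [hs] with y hy
    exact (intervalIntegrable_ellipticK_integrand ((hsq y hy).trans hb2) _ _).def'.1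
  · exact (continuous_div_sqrt_one_sub_sq_mul_sin_sq_pow hk2 (by fun_prop) 3).aestronglyMeasurable
  · refine ae_of_all _ fun θ _ y hy => ?_
    have hpos : 0 < √(1 - b ^ 2) := sqrt_pos.2 (by linarith)
    have hle := sqrt_le_sqrt (hu y hy θ)
    rw [Real.norm_eq_abs, abs_div, abs_of_pos (pow_pos (hpos.trans_le hle) 3)]
    refine div_le_div₀ zero_le_one ?_ (pow_pos hpos 3) (pow_le_pow_left₀ hpos.le hle 3)
    rw [abs_mul, abs_of_nonneg (sq_nonneg (sin θ))]
    have : |y| < 1 := abs_lt.2 ⟨by linarith [hy.1], by linarith [hy.2]⟩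
    nlinarith [sin_sq_le_one θ, abs_nonneg y, sq_nonneg (sin θ)]
  · exact ae_of_all _ fun θ _ y hy => hasDerivAt_one_div_sqrt_one_sub_sq_mul
      (by nlinarith [sin_sq_le_one θ, sq_nonneg (sin θ), hsq y hy])

lemma continuousOn_ellipticK : ContinuousOn ellipticK (Ioo (-1) 1) := fun _ hk =>
  (hasDerivAt_ellipticK (abs_lt.2 hk)).continuousAt.continuousWithinAt

lemma mul_ellipticK_div_two_le_deriv_ellipticK (hk0 : 0 ≤ k) (hk1 : k < 1) :
    k * ellipticK k / 2 ≤ deriv ellipticK k := by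
  have hk : k ^ 2 < 1 := by nlinarith
  rw [(hasDerivAt_ellipticK (abs_lt.2 ⟨by linarith, hk1⟩)).deriv]
  have hu : ∀ t ∈ Icc (0 : ℝ) 1, 0 < 1 - k ^ 2 * t := fun t ht => by
    nlinarith [ht.2, sq_nonneg k]
  have hmono : MonotoneOn (fun t => 1 / √(1 - k ^ 2 * t)) (Icc 0 1) := fun s _ t ht hst =>
    one_div_le_one_div_of_le (sqrt_pos.2 (hu t ht)) (sqrt_le_sqrt (by nlinarith [sq_nonneg k]))
  have hcont : ContinuousOn (fun t => 1 / √(1 - k ^ 2 * t)) (Icc 0 1) :=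
    continuousOn_const.div (by fun_prop) fun t ht => (sqrt_pos.2 (hu t ht)).ne'
  have hcube_le (θ : ℝ) : √(1 - k ^ 2 * sin θ ^ 2) ^ 3 ≤ √(1 - k ^ 2 * sin θ ^ 2) :=
    pow_le_of_le_one (sqrt_nonneg _)
      (sqrt_le_one.2 (by nlinarith [sq_nonneg k, sq_nonneg (sin θ)])) (by norm_num)
  calc k * ellipticK k / 2 = k * (ellipticK k / 2) := by ring
    _ ≤ k * ∫ θ in (0 : ℝ)..π / 2, sin θ ^ 2 * (1 / √(1 - k ^ 2 * sin θ ^ 2)) :=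
      mul_le_mul_of_nonneg_left (integral_comp_sin_sq_div_two_le hmono hcont) hk0
    _ = ∫ θ in (0 : ℝ)..π / 2, k * sin θ ^ 2 / √(1 - k ^ 2 * sin θ ^ 2) := by
      rw [← intervalIntegral.integral_const_mul]
      congr 1 with θ
      ring
    _ ≤ _ := by
      refine intervalIntegral.integral_mono_on pi_div_two_pos.le ?_ ?_ fun θ _ =>
        div_le_div_of_nonneg_left (by positivity)
          (pow_pos (sqrt_pos.2 (one_sub_sq_mul_sin_sq_pos hk θ)) 3) (hcube_le θ)
      · simpa only [pow_one] using (continuous_div_sqrt_one_sub_sq_mul_sin_sq_pow hk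
          (by fun_prop : Continuous fun θ => k * sin θ ^ 2) 1).intervalIntegrable _ _
      · exact (continuous_div_sqrt_one_sub_sq_mul_sin_sq_pow hk (by fun_prop) 3).intervalIntegrable
          _ _

lemma log_le_ellipticK (hk : k ^ 2 < 1) : log (1 + π / 2 * (√(1 - k ^ 2))⁻¹) ≤ ellipticK k := by
  set c := √(1 - k ^ 2)
  have hc : 0 < c := sqrt_pos.2 (by linarith)
  have hc2 : c ^ 2 = 1 - k ^ 2 := sq_sqrt (by linarith)
  have hpos : ∀ θ ∈ uIcc 0 (π / 2), 0 < c + π / 2 - θ := fun θ hθ => by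
    rw [uIcc_of_le pi_div_two_pos.le] at hθ; linarith [hθ.2]
  have hlog : ∫ θ in (0 : ℝ)..π / 2, (c + π / 2 - θ)⁻¹ = log (1 + π / 2 * c⁻¹) := by
    rw [intervalIntegral.integral_comp_sub_left (fun x => x⁻¹),
      integral_inv_of_pos (by linarith) (by linarith [pi_pos])]
    congr 1
    field_simp
    ring
  rw [← hlog]
  refine intervalIntegral.integral_mono_on pi_div_two_pos.le
    ((ContinuousOn.inv₀ (by fun_prop) fun θ hθ => (hpos θ hθ).ne').intervalIntegrable)
    (intervalIntegrable_ellipticK_integrand hk _ _) fun θ hθ => ?_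
  have ht : 0 ≤ π / 2 - θ := by linarith [hθ.2]
  have hcos : cos θ ^ 2 ≤ (π / 2 - θ) ^ 2 := by
    simpa only [sin_pi_div_two_sub] using sin_sq_le_sq (x := π / 2 - θ)
  rw [one_div]
  refine inv_anti₀ (sqrt_pos.2 (one_sub_sq_mul_sin_sq_pos hk θ))
    ((sqrt_le_left (by linarith)).2 ?_)
  -- `1 - k² sin² θ = c² + k² cos² θ ≤ c² + (π/2 - θ)²`
  nlinarith [sin_sq_add_cos_sq θ, mul_nonneg hc.le ht, mul_le_mul_of_nonneg_left hcos (sq_nonneg k),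
    mul_le_mul_of_nonneg_right hk.le (sq_nonneg (cos θ))]

end EllipticK

lemma tendsto_ellipticK_nhdsLT_one_atTop : Tendsto ellipticK (𝓝[<] 1) atTop := by
  have hmem : Ioo (-1 : ℝ) 1 ∈ 𝓝[<] 1 := Ioo_mem_nhdsLT (by norm_num)
  have hc : Tendsto (fun k : ℝ => √(1 - k ^ 2)) (𝓝[<] 1) (𝓝[>] 0) := by
    refine tendsto_nhdsWithin_iff.2 ⟨?_, ?_⟩
    · simpa using ((by fun_prop : Continuous fun k : ℝ => √(1 - k ^ 2)).tendsto 1).mono_left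
        nhdsWithin_le_nhds
    · filter_upwards [hmem] with k hk
      exact sqrt_pos.2 (by nlinarith [hk.1, hk.2])
  have hlog : Tendsto (fun k => log (1 + π / 2 * (√(1 - k ^ 2))⁻¹)) (𝓝[<] 1) atTop :=
    tendsto_log_atTop.comp (tendsto_atTop_add_const_left _ 1
      ((tendsto_inv_nhdsGT_zero.comp hc).const_mul_atTop pi_div_two_pos))
  refine tendsto_atTop_mono' _ ?_ hlog
  filter_upwards [hmem] with k hk using log_le_ellipticK (by nlinarith [hk.1, hk.2])

lemma pow_four_sub_sq_add_one_pos (k : ℝ) : 0 < k ^ 4 - k ^ 2 + 1 := by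
  nlinarith [sq_nonneg (k ^ 2 - 1 / 2)]

lemma deriv_ellipticK_sq_mul_sqrt_pos {k : ℝ} (hk : k ∈ Ioo (0 : ℝ) 1) :
    0 < deriv (fun k => ellipticK k ^ 2 * √(k ^ 4 - k ^ 2 + 1)) k := by
  have hK := pi_div_two_pos.trans_le (pi_div_two_le_ellipticK (by nlinarith [hk.1, hk.2]))
  have hDK := mul_ellipticK_div_two_le_deriv_ellipticK hk.1.le hk.2
  have hQ := pow_four_sub_sq_add_one_pos k
  have hs := sqrt_pos.2 hQ
  have hQ' : HasDerivAt (fun k : ℝ => k ^ 4 - k ^ 2 + 1) (4 * k ^ 3 - 2 * k) k := by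
    simpa using ((hasDerivAt_pow 4 k).sub (hasDerivAt_pow 2 k)).add_const 1
  have hderiv : HasDerivAt (fun k => ellipticK k ^ 2 * √(k ^ 4 - k ^ 2 + 1)) _ k :=
    (((hasDerivAt_ellipticK (abs_lt.2 ⟨by linarith [hk.1], hk.2⟩)).differentiableAt.hasDerivAt).pow
      2).mul (hQ'.sqrt hQ.ne')
  rw [hderiv.deriv]
  have hnum : 0 < 2 * ellipticK k * deriv ellipticK k * (k ^ 4 - k ^ 2 + 1) +
      ellipticK k ^ 2 * (2 * k ^ 3 - k) := by
    nlinarith [mul_le_mul_of_nonneg_left hDK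
        (by positivity : 0 ≤ 2 * ellipticK k * (k ^ 4 - k ^ 2 + 1)),
      mul_pos (mul_pos hk.1 (mul_pos hK hK)) (add_pos (pow_pos hk.1 4) (pow_pos hk.1 2))]
  rw [← sq_sqrt hQ.le] at hnum
  refine (div_pos hnum hs).trans_eq ?_
  simp only [Pi.pow_apply, Nat.cast_ofNat]
  set s := √(k ^ 4 - k ^ 2 + 1)
  field_simp
  ring

lemma strictMonoOn_ellipticK_sq_mul_sqrt :
    StrictMonoOn (fun k => ellipticK k ^ 2 * √(k ^ 4 - k ^ 2 + 1)) (Ico 0 1) :=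
  strictMonoOn_of_deriv_pos (convex_Ico 0 1)
    (((continuousOn_ellipticK.mono (Ico_subset_Ioo_left (by norm_num))).pow 2).mul
      (by fun_prop))
    fun _ hk => deriv_ellipticK_sq_mul_sqrt_pos (by rwa [interior_Ico] at hk)

lemma omegaOf_eq (L : ℝ) :
    omegaOf L = fun k => 16 / L ^ 2 * (ellipticK k ^ 2 * √(k ^ 4 - k ^ 2 + 1)) := by
  funext k
  have hQ := pow_four_sub_sq_add_one_pos k
  unfold omegaOf
  set s := √(k ^ 4 - k ^ 2 + 1)
  have hs := sqrt_pos.2 hQ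
  have hs2 : s ^ 2 = k ^ 4 - k ^ 2 + 1 := sq_sqrt hQ.le
  -- `s² = (k² - 1)² + k²`, so `s > k² - 1`.
  have hd : 0 < 1 + s - k ^ 2 := by nlinarith [sq_nonneg k]
  have hnum : (1 - k ^ 2) * s + k ^ 4 - k ^ 2 + 1 = s * (1 + s - k ^ 2) := by
    linear_combination -hs2
  rw [hnum, show 16 * ellipticK k ^ 2 * (s * (1 + s - k ^ 2)) =
    16 * ellipticK k ^ 2 * s * (1 + s - k ^ 2) by ring, mul_comm (1 + s - k ^ 2),
    mul_div_mul_right _ _ hd.ne']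
  ring

section Omega

variable {L : ℝ}

lemma continuousOn_omegaOf (L : ℝ) : ContinuousOn (omegaOf L) (Ioo (-1) 1) := by
  rw [omegaOf_eq]
  exact continuousOn_const.mul ((continuousOn_ellipticK.pow 2).mul (by fun_prop))

lemma strictMonoOn_omegaOf (hL : L ≠ 0) : StrictMonoOn (omegaOf L) (Ioo 0 1) := by
  rw [omegaOf_eq]
  exact fun a ha b hb hab => mul_lt_mul_of_pos_left (strictMonoOn_ellipticK_sq_mul_sqrt
    (Ioo_subset_Ico_self ha) (Ioo_subset_Ico_self hb) hab) (by positivity)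

lemma tendsto_omegaOf_nhdsGT_zero (L : ℝ) :
    Tendsto (omegaOf L) (𝓝[>] 0) (𝓝 (4 * π ^ 2 / L ^ 2)) := by
  have h := ((continuousOn_omegaOf L).continuousAt
    (Ioo_mem_nhds (by norm_num : (-1 : ℝ) < 0) one_pos)).tendsto
  rw [omegaOf_eq] at h ⊢
  convert h.mono_left nhdsWithin_le_nhds using 2
  simp [ellipticK]
  ring

lemma tendsto_omegaOf_nhdsLT_one_atTop (hL : L ≠ 0) : Tendsto (omegaOf L) (𝓝[<] 1) atTop := by
  have hQ : Tendsto (fun k : ℝ => √(k ^ 4 - k ^ 2 + 1)) (𝓝[<] 1) (𝓝 1) := by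
    simpa using ((by fun_prop : Continuous fun k : ℝ => √(k ^ 4 - k ^ 2 + 1)).tendsto 1).mono_left
      nhdsWithin_le_nhds
  rw [omegaOf_eq]
  exact (((tendsto_pow_atTop two_ne_zero).comp tendsto_ellipticK_nhdsLT_one_atTop).atTop_mul_pos
    one_pos hQ).const_mul_atTop (by positivity)

end Omega

theorem stmt_2 (L : ℝ) (hL : L > 0) :
    StrictMonoOn (omegaOf L) (Set.Ioo 0 1) ∧
    Filter.Tendsto (omegaOf L) (nhdsWithin 0 (Set.Ioi 0))
      (nhds (4 * Real.pi ^ 2 / L ^ 2)) ∧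
    Filter.Tendsto (omegaOf L) (nhdsWithin 1 (Set.Iio 1)) Filter.atTop ∧
    Set.BijOn (omegaOf L) (Set.Ioo 0 1) (Set.Ioi (4 * Real.pi ^ 2 / L ^ 2)) := by
  have hmono := strictMonoOn_omegaOf hL.ne'
  have hzero := tendsto_omegaOf_nhdsGT_zero L
  have hone := tendsto_omegaOf_nhdsLT_one_atTop hL.ne'
  exact ⟨hmono, hzero, hone, hmono.bijOn_Ioo_Ioi one_pos
    ((continuousOn_omegaOf L).mono (Ioo_subset_Ioo_left (by norm_num))) hzero hone⟩
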